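/- For every integer p ≥ 2 and every complex number s with Re s > 1, ∫_0^∞ x^{2s−1}·( coth(px)/sinh(2x) − 1/(2p·sinh²(x)) ) dx = 2^{1−2s}·Γ(2s)·( ∑_{m,n≥0} (1+2m+pn)^{−2s} + ∑_{m,n≥0} (1+p+2m+pn)^{−2s} − (1/p)·∑_{m,n≥0} (1+m+n)^{−2s} ), where each double sum over pairs of nonnegative integers (m, n) converges absolutely. -/

import Mathlib

/-!
With `q = e^{-2x}` one has `coth(px) = (1 + q^p)/(1 - q^p)`, `1/sinh(2x) = 2q/(1 - q²)` and
`1/sinh²x = 4q/(1 - q)²`, so expanding the three rational functions of `q` into geometric series gives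
`g_p(x) = 2∑ q^(1+2m+pn) + 2∑ q^(1+p+2m+pn) - (2/p)∑ q^(1+m+n)`.
Each term `e^{-2kx}` has Mellin transform `Γ(2s)(2k)^{-2s}`, and for `Re s > 1` the resulting
double series converge absolutely, which justifies integrating term by term.
-/

open Real Complex MeasureTheory

/-- The elliptic fixed-point integrand `g_p(x) = coth(px)/sinh(2x) - 1/(2p sinh²x)`. -/
noncomputable def ellipticIntegrand (p : ℕ) (x : ℝ) : ℝ :=
  Real.cosh (p * x) / Real.sinh (p * x) / Real.sinh (2 * x) -
    1 / (2 * p * Real.sinh x ^ 2)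

theorem hasSum_prod_of_fintype {ι β M : Type*} [Fintype ι] [AddCommMonoid M] [TopologicalSpace M]
    [ContinuousAdd M] {f : ι → β → M} {a : ι → M} (h : ∀ i, HasSum (f i) (a i)) :
    HasSum (fun k : ι × β ↦ f k.1 k.2) (∑ i, a i) := by
  classical
  have hfiber (i : ι) : HasSum (fun k : ι × β ↦ if k.1 = i then f k.1 k.2 else 0) (a i) := by
    rw [← (Prod.mk_right_injective i).hasSum_iff]
    · simpa [Function.comp_def] using h i
    · rintro ⟨j, b⟩ hjb
      simp only [ite_eq_right_iff]
      rintro rfl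
      exact absurd ⟨b, rfl⟩ hjb
  simpa using hasSum_sum (s := Finset.univ) fun i _ ↦ hfiber i

theorem summable_one_add_add_rpow_neg {t : ℝ} (ht : 2 < t) :
    Summable fun mn : ℕ × ℕ ↦ (1 + mn.1 + mn.2 : ℝ) ^ (-t) := by
  have hone : Summable fun m : ℕ ↦ ((m : ℝ) + 1) ^ (-(t / 2)) := by
    refine ((Real.summable_one_div_nat_add_rpow 1 (t / 2)).mpr (by linarith)).congr fun m ↦ ?_
    rw [one_div, ← Real.rpow_neg (abs_nonneg _), abs_of_nonneg (by positivity)]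
  refine .of_nonneg_of_le (fun _ ↦ by positivity) (fun ⟨m, n⟩ ↦ ?_)
    (hone.mul_of_nonneg hone (fun _ ↦ by positivity) (fun _ ↦ by positivity))
  have hle : ((m : ℝ) + 1) * (n + 1) ≤ (1 + m + n) ^ 2 := by
    nlinarith [m.cast_nonneg (α := ℝ), n.cast_nonneg (α := ℝ)]
  calc (1 + m + n : ℝ) ^ (-t) = ((1 + m + n : ℝ) ^ 2) ^ (-(t / 2)) := by
        rw [← Real.rpow_natCast, ← Real.rpow_mul (by positivity)]; ring_nf
    _ ≤ (((m : ℝ) + 1) * (n + 1)) ^ (-(t / 2)) :=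
        Real.rpow_le_rpow_of_nonpos (by positivity) hle (by linarith)
    _ = _ := Real.mul_rpow (by positivity) (by positivity)

def barnesTerm (a b c : ℕ) (mn : ℕ × ℕ) : ℕ := a + b * mn.1 + c * mn.2

def barnesGenFun {K : Type*} [DivisionRing K] (a b c : ℕ) (q : K) : K :=
  q ^ a / ((1 - q ^ b) * (1 - q ^ c))

/-- The Barnes double zeta function `ζ_{B2}(s, a | b, c)`. -/
noncomputable def barnesZeta (a b c : ℕ) (s : ℂ) : ℂ := ∑' mn, (barnesTerm a b c mn : ℂ) ^ (-s)

section Barnes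

variable {a b c : ℕ}

theorem natCast_barnesTerm {R : Type*} [Semiring R] (mn : ℕ × ℕ) :
    (barnesTerm a b c mn : R) = a + b * mn.1 + c * mn.2 := by
  push_cast [barnesTerm]; rfl

theorem one_add_add_le_barnesTerm (ha : a ≠ 0) (hb : b ≠ 0) (hc : c ≠ 0) (mn : ℕ × ℕ) :
    1 + mn.1 + mn.2 ≤ barnesTerm a b c mn := by
  have := Nat.le_mul_of_pos_left mn.1 (Nat.pos_of_ne_zero hb)
  have := Nat.le_mul_of_pos_left mn.2 (Nat.pos_of_ne_zero hc)
  unfold barnesTerm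
  omega

theorem summable_norm_barnesTerm_cpow_neg (ha : a ≠ 0) (hb : b ≠ 0) (hc : c ≠ 0) {s : ℂ}
    (hs : 2 < s.re) : Summable fun mn ↦ ‖(barnesTerm a b c mn : ℂ) ^ (-s)‖ := by
  refine (summable_one_add_add_rpow_neg hs).of_nonneg_of_le (fun _ ↦ norm_nonneg _) fun mn ↦ ?_
  have hle := one_add_add_le_barnesTerm ha hb hc mn
  rw [norm_natCast_cpow_of_pos (by omega), neg_re]
  exact Real.rpow_le_rpow_of_nonpos (by positivity) (by exact_mod_cast hle) (by linarith)

theorem hasSum_pow_barnesTerm {K : Type*} [NormedField K] [CompleteSpace K] {q : K}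
    (hq : ‖q‖ < 1) (hb : b ≠ 0) (hc : c ≠ 0) :
    HasSum (fun mn ↦ q ^ barnesTerm a b c mn) (barnesGenFun a b c q) := by
  have hpow {k : ℕ} (hk : k ≠ 0) : ‖q ^ k‖ < 1 := by
    rw [norm_pow]; exact pow_lt_one₀ (norm_nonneg _) hq hk
  have hsum {k : ℕ} (hk : k ≠ 0) : Summable fun n : ℕ ↦ ‖(q ^ k) ^ n‖ := by
    simpa only [norm_pow] using summable_geometric_of_lt_one (norm_nonneg _) (hpow hk)
  have hprod := (hasSum_geometric_of_norm_lt_one (hpow hb)).mul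
    (hasSum_geometric_of_norm_lt_one (hpow hc)) (summable_mul_of_summable_norm (hsum hb) (hsum hc))
  rw [barnesGenFun, div_eq_mul_inv, mul_inv]
  exact (hprod.mul_left (q ^ a)).congr_fun fun mn ↦ by
    simp only [barnesTerm, pow_add, pow_mul, mul_assoc]

theorem hasSum_exp_barnesTerm (hb : b ≠ 0) (hc : c ≠ 0) {μ t : ℝ} (hμ : 0 < μ) (ht : 0 < t) :
    HasSum (fun mn ↦ rexp (-(μ * barnesTerm a b c mn) * t)) (barnesGenFun a b c (rexp (-μ * t))) := by
  have hq : ‖rexp (-μ * t)‖ < 1 := by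
    rw [Real.norm_of_nonneg (Real.exp_pos _).le, Real.exp_lt_one_iff]
    nlinarith
  exact (hasSum_pow_barnesTerm hq hb hc).congr_fun fun mn ↦ by
    rw [← Real.exp_nat_mul]; ring_nf

theorem mellin_sum_barnesGenFun {ι : Type*} [Fintype ι] (w : ι → ℂ) {a b c : ι → ℕ}
    (ha : ∀ i, a i ≠ 0) (hb : ∀ i, b i ≠ 0) (hc : ∀ i, c i ≠ 0) {μ : ℝ} (hμ : 0 < μ)
    {s : ℂ} (hs : 2 < s.re) :
    mellin (fun x ↦ ∑ i, w i * ((barnesGenFun (a i) (b i) (c i) (rexp (-μ * x)) : ℝ) : ℂ)) s =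
      Gamma s * (μ : ℂ) ^ (-s) * ∑ i, w i * barnesZeta (a i) (b i) (c i) s := by
  have hpos (i) (mn) : 0 < barnesTerm (a i) (b i) (c i) mn := by
    have := one_add_add_le_barnesTerm (ha i) (hb i) (hc i) mn; omega
  have hexp (t : ℝ) (ht : t ∈ Set.Ioi 0) : HasSum
      (fun k : ι × (ℕ × ℕ) ↦ w k.1 * rexp (-(μ * barnesTerm (a k.1) (b k.1) (c k.1) k.2) * t))
      (∑ i, w i * ((barnesGenFun (a i) (b i) (c i) (rexp (-μ * t)) : ℝ) : ℂ)) :=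
    hasSum_prod_of_fintype fun i ↦ (Complex.hasSum_ofReal.mpr
      (hasSum_exp_barnesTerm (hb i) (hc i) hμ ht)).mul_left (w i)
  have hnorm (i : ι) : Summable fun mn ↦ ‖w i‖ / (μ * barnesTerm (a i) (b i) (c i) mn) ^ s.re := by
    refine ((summable_norm_barnesTerm_cpow_neg (ha i) (hb i) (hc i) hs).mul_left
      (‖w i‖ * μ ^ (-s.re))).congr fun mn ↦ ?_
    rw [norm_natCast_cpow_of_pos (hpos _ _), neg_re, Real.mul_rpow hμ.le (Nat.cast_nonneg _),
      Real.rpow_neg hμ.le, Real.rpow_neg (Nat.cast_nonneg _)]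
    field_simp
  have hterm (i : ι) : HasSum
      (fun mn ↦ Gamma s * w i / ((μ * barnesTerm (a i) (b i) (c i) mn : ℝ) : ℂ) ^ s)
      (Gamma s * (μ : ℂ) ^ (-s) * (w i * barnesZeta (a i) (b i) (c i) s)) := by
    refine (((summable_norm_barnesTerm_cpow_neg (ha i) (hb i) (hc i) hs).of_norm.hasSum.mul_left
      (w i)).mul_left (Gamma s * (μ : ℂ) ^ (-s))).congr_fun fun mn ↦ ?_
    rw [Complex.ofReal_mul, mul_cpow_ofReal_nonneg hμ.le (Nat.cast_nonneg _),
      Complex.ofReal_natCast, cpow_neg, cpow_neg]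
    field_simp
  have hmellin := hasSum_mellin (a := fun k : ι × (ℕ × ℕ) ↦ w k.1)
    (p := fun k ↦ μ * barnesTerm (a k.1) (b k.1) (c k.1) k.2)
    (fun k ↦ Or.inr (mul_pos hμ (Nat.cast_pos.mpr (hpos k.1 k.2)))) (by linarith) hexp
    (hasSum_prod_of_fintype fun i ↦ (hnorm i).hasSum).summable
  rw [Finset.mul_sum]
  exact hmellin.unique (hasSum_prod_of_fintype hterm)

end Barnes

theorem Real.sinh_eq_one_sub_exp_div (y : ℝ) :
    Real.sinh y = (1 - rexp (-2 * y)) / (2 * rexp (-y)) := by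
  rw [Real.sinh_eq, show -2 * y = -y + -y by ring, Real.exp_add]
  field_simp
  rw [mul_sub, ← Real.exp_add, neg_add_cancel, Real.exp_zero, sq]

theorem Real.cosh_eq_one_add_exp_div (y : ℝ) :
    Real.cosh y = (1 + rexp (-2 * y)) / (2 * rexp (-y)) := by
  rw [Real.cosh_eq, show -2 * y = -y + -y by ring, Real.exp_add]
  field_simp
  rw [mul_add, ← Real.exp_add, neg_add_cancel, Real.exp_zero, sq]

theorem ellipticIntegrand_eq_barnesGenFun {p : ℕ} (hp : p ≠ 0) {x : ℝ} (hx : 0 < x) :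
    ellipticIntegrand p x = 2 * barnesGenFun 1 2 p (rexp (-2 * x)) +
      2 * barnesGenFun (1 + p) 2 p (rexp (-2 * x)) - 2 / p * barnesGenFun 1 1 1 (rexp (-2 * x)) := by
  have hpx : rexp (-2 * (p * x)) = rexp (-2 * x) ^ p := by rw [← Real.exp_nat_mul]; ring_nf
  have h2x : rexp (-2 * (2 * x)) = rexp (-2 * x) ^ 2 := by
    rw [← Real.exp_nat_mul]; push_cast; ring_nf
  have h2x' : rexp (-(2 * x)) = rexp (-2 * x) := by rw [neg_mul]
  have hx2 : rexp (-x) ^ 2 = rexp (-2 * x) := by rw [← Real.exp_nat_mul]; push_cast; ring_nf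
  have hq0 : 0 < rexp (-2 * x) := Real.exp_pos _
  have hq1 : rexp (-2 * x) < 1 := Real.exp_lt_one_iff.mpr (by linarith)
  have hpx0 : rexp (-(p * x)) ≠ 0 := (Real.exp_pos _).ne'
  simp only [ellipticIntegrand, barnesGenFun, Real.cosh_eq_one_add_exp_div,
    Real.sinh_eq_one_sub_exp_div, hpx, h2x, h2x', div_pow, mul_pow, hx2]
  generalize rexp (-2 * x) = q at *
  have h1 : 1 - q ^ p ≠ 0 := (sub_pos.mpr (pow_lt_one₀ hq0.le hq1 hp)).ne'
  have h2 : 1 - q ^ 2 ≠ 0 := (sub_pos.mpr (pow_lt_one₀ hq0.le hq1 two_ne_zero)).ne'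
  have h3 : 1 - q ≠ 0 := (sub_pos.mpr hq1).ne'
  have hp' : (p : ℝ) ≠ 0 := by exact_mod_cast hp
  field_simp
  ring

theorem elliptic_mellin_eq_barnes (p : ℕ) (hp : 2 ≤ p) (s : ℂ) (hs : 1 < s.re) :
    (Summable fun mn : ℕ × ℕ =>
        ‖(1 + 2 * (mn.1 : ℂ) + p * mn.2) ^ (-(2 * s))‖) ∧
    (Summable fun mn : ℕ × ℕ =>
        ‖(1 + (p : ℂ) + 2 * mn.1 + p * mn.2) ^ (-(2 * s))‖) ∧
    (Summable fun mn : ℕ × ℕ =>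
        ‖(1 + (mn.1 : ℂ) + mn.2) ^ (-(2 * s))‖) ∧
    ∫ x in Set.Ioi (0 : ℝ), (x : ℂ) ^ (2 * s - 1) * (ellipticIntegrand p x : ℂ) =
      (2 : ℂ) ^ (1 - 2 * s) * Complex.Gamma (2 * s) *
        ((∑' mn : ℕ × ℕ, (1 + 2 * (mn.1 : ℂ) + p * mn.2) ^ (-(2 * s))) +
          (∑' mn : ℕ × ℕ, (1 + (p : ℂ) + 2 * mn.1 + p * mn.2) ^ (-(2 * s))) -
          (1 / p) * ∑' mn : ℕ × ℕ, (1 + (mn.1 : ℂ) + mn.2) ^ (-(2 * s))) := by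
  have hp0 : p ≠ 0 := by omega
  have h2s : 2 < (2 * s).re := by rw [show (2 * s).re = 2 * s.re by simp]; linarith
  refine ⟨?_, ?_, ?_, ?_⟩
  · simpa [natCast_barnesTerm] using summable_norm_barnesTerm_cpow_neg
      (a := 1) (b := 2) (c := p) one_ne_zero two_ne_zero hp0 h2s
  · simpa [natCast_barnesTerm] using summable_norm_barnesTerm_cpow_neg
      (a := 1 + p) (b := 2) (c := p) (by omega) two_ne_zero hp0 h2s
  · simpa [natCast_barnesTerm] using summable_norm_barnesTerm_cpow_neg
      (a := 1) (b := 1) (c := 1) one_ne_zero one_ne_zero one_ne_zero h2s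
  have hF : ∫ x in Set.Ioi (0 : ℝ), (x : ℂ) ^ (2 * s - 1) * (ellipticIntegrand p x : ℂ) =
      mellin (fun x ↦ ∑ i, ![2, 2, -(2 / (p : ℂ))] i * ((barnesGenFun (![1, 1 + p, 1] i)
        (![2, 2, 1] i) (![p, p, 1] i) (rexp (-2 * x)) : ℝ) : ℂ)) (2 * s) :=
    setIntegral_congr_fun measurableSet_Ioi fun x hx ↦ by
      simp only [smul_eq_mul, Fin.sum_univ_three, ellipticIntegrand_eq_barnesGenFun hp0 hx]
      push_cast
      ring
  rw [hF, mellin_sum_barnesGenFun _ (by simp [Fin.forall_fin_succ]) (by simp [Fin.forall_fin_succ])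
    (by simp [Fin.forall_fin_succ, hp0]) two_pos h2s]
  simp only [Fin.sum_univ_three, barnesZeta, natCast_barnesTerm, Matrix.cons_val_zero,
    Matrix.cons_val_one, Matrix.cons_val, Nat.cast_one, Nat.cast_ofNat, Nat.cast_add, one_mul,
    ofReal_ofNat]
  rw [sub_eq_add_neg 1, cpow_add _ _ two_ne_zero, cpow_one]
  ring
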